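/- Let α ∈ [0,1]. For any qubit states ρ_x indexed by x = (x₀,x₁) ∈ {0,1}², any 2×2 complex unitary matrices U₀, U₁, and any two-outcome qubit POVMs (C^z_0, C^z_1) for z ∈ {0,1}, the quantity P = α/2 + ((1−α)/16)·Σ_{x∈{0,1}²} Σ_{y∈{0,1}} Σ_{z∈{0,1}} tr(U_y ρ_x U_y† C^z_{x_z}) satisfies P ≤ α/2 + (1−α)(1/2 + 1/(2√2)) = 1/2 + (1−α)/(2√2). (This is the bound on the average success probability for the 'unitary' projective strategy, where Bob always outputs b = 0 and applies a unitary channel U_y; the first term α/2 is Bob's guessing contribution since exactly half of the pairs x have x_y = 0.) -/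

import Mathlib

open Matrix
open scoped ComplexOrder

noncomputable section

abbrev Mat2 := Matrix (Fin 2) (Fin 2) ℂ

/-- A qubit state: a positive semidefinite 2×2 complex matrix with unit trace. -/
def IsQubitState (ρ : Mat2) : Prop := ρ.PosSemidef ∧ ρ.trace = 1

/-- A two-outcome qubit POVM: a pair of positive semidefinite matrices summing to the identity. -/
def IsPOVMPair (E₀ E₁ : Mat2) : Prop := E₀.PosSemidef ∧ E₁.PosSemidef ∧ E₀ + E₁ = 1

/-- The `y`-th bit of the pair `(x₀, x₁)`. -/
def sel (x₀ x₁ y : Fin 2) : Fin 2 := if y = 0 then x₀ else x₁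

/-!
Write a Hermitian `M` as `(tr M / 2) • 1` plus a traceless part with Pauli coordinates
`b M ∈ ℝ³`, so that `‖b M‖` is half the eigenvalue gap of `M`. Then
`Re tr (A B) = Re tr A · Re tr B / 2 + 2 ⟪b A, b B⟫`, and positivity gives `‖b A‖ ≤ Re tr A / 2`;
hence `Re tr (ρ M) ≤ Re tr M / 2 + ‖b M‖` for a qubit state `ρ`, and `‖b E‖ ≤ 1/2` for a POVM
element `E`. Conjugating by `U y` only replaces the states `ρ x` by other states. For fixed `y`,
with `u = b (C 0 0)`, `v = b (C 1 0)` and `b (C z 1) = -b (C z 0)`, the sum over `x` and `z` is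
at most `4 + 2 (‖u + v‖ + ‖u - v‖)`, and the parallelogram law bounds `‖u + v‖ + ‖u - v‖` by `√2`:
this is the optimal success probability `1/2 + 1/(2√2)` of the `2 → 1` quantum random access code.
-/

/-- For Hermitian `A` this is half its Bloch vector, with axes ordered `(z, x, -y)`:
`A = (tr A / 2) • 1 + a₀ σ_z + a₁ σ_x - a₂ σ_y`. -/
def blochVector : Mat2 →ₗ[ℝ] EuclideanSpace ℝ (Fin 3) where
  toFun A := !₂[((A 0 0).re - (A 1 1).re) / 2, (A 0 1).re, (A 0 1).im]
  map_add' A B := by ext i; fin_cases i <;> simp; ring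
  map_smul' r A := by ext i; fin_cases i <;> simp; ring

lemma blochVector_one : blochVector 1 = 0 := by
  ext i; fin_cases i <;> simp [blochVector]

lemma norm_blochVector_sq (A : Mat2) :
    ‖blochVector A‖ ^ 2 = (((A 0 0).re - (A 1 1).re) / 2) ^ 2 + Complex.normSq (A 0 1) := by
  rw [EuclideanSpace.real_norm_sq_eq, Fin.sum_univ_three, Complex.normSq_apply]
  simp [blochVector]
  ring

lemma Matrix.IsHermitian.im_apply_self {n : Type*} {A : Matrix n n ℂ} (hA : A.IsHermitian) (i : n) :
    (A i i).im = 0 :=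
  Complex.conj_eq_iff_im.mp (hA.apply i i)

lemma re_trace_mul_eq_of_isHermitian {A B : Mat2} (hA : A.IsHermitian) (hB : B.IsHermitian) :
    ((A * B).trace).re = (A.trace).re * (B.trace).re / 2
      + 2 * inner ℝ (blochVector A) (blochVector B) := by
  simp only [Matrix.trace_fin_two, Matrix.mul_apply, Fin.sum_univ_two]
  rw [← hA.apply 1 0, ← hB.apply 1 0]
  simp [blochVector, PiLp.inner_apply, Fin.sum_univ_three, hA.im_apply_self, hB.im_apply_self]
  ring

lemma Matrix.PosSemidef.norm_blochVector_le {A : Mat2} (hA : A.PosSemidef) :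
    ‖blochVector A‖ ≤ (A.trace).re / 2 := by
  have h₀ := (Complex.nonneg_iff.mp (hA.diag_nonneg (i := 0))).1
  have h₁ := (Complex.nonneg_iff.mp (hA.diag_nonneg (i := 1))).1
  have hdet : Complex.normSq (A 0 1) ≤ (A 0 0).re * (A 1 1).re := by
    have h := (Complex.nonneg_iff.mp hA.det_nonneg).1
    rw [Matrix.det_fin_two, ← hA.isHermitian.apply 1 0] at h
    simp only [Complex.sub_re, Complex.mul_re, hA.isHermitian.im_apply_self] at h
    simp only [Complex.normSq_apply, RCLike.star_def, Complex.conj_re, Complex.conj_im] at h ⊢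
    linarith
  have htr : (A.trace).re = (A 0 0).re + (A 1 1).re := by simp [Matrix.trace_fin_two]
  refine (pow_le_pow_iff_left₀ (norm_nonneg _) (by linarith) two_ne_zero).mp ?_
  rw [norm_blochVector_sq, htr]
  nlinarith

lemma IsQubitState.re_trace_mul_le {ρ M : Mat2} (hρ : IsQubitState ρ) (hM : M.IsHermitian) :
    ((ρ * M).trace).re ≤ (M.trace).re / 2 + ‖blochVector M‖ := by
  have hρ_norm : ‖blochVector ρ‖ ≤ 1 / 2 := by
    simpa [hρ.2] using hρ.1.norm_blochVector_le
  rw [re_trace_mul_eq_of_isHermitian hρ.1.isHermitian hM, hρ.2, Complex.one_re]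
  nlinarith [real_inner_le_norm (blochVector ρ) (blochVector M), norm_nonneg (blochVector M)]

lemma IsQubitState.unitary_conj {ρ U : Mat2} (hρ : IsQubitState ρ)
    (hU : U ∈ Matrix.unitaryGroup (Fin 2) ℂ) : IsQubitState (U * ρ * Uᴴ) :=
  ⟨hρ.1.mul_mul_conjTranspose_same U, by
    rw [Matrix.trace_mul_cycle, ← Matrix.star_eq_conjTranspose, Matrix.mem_unitaryGroup_iff'.mp hU,
      one_mul, hρ.2]⟩

lemma IsPOVMPair.re_trace_add {E₀ E₁ : Mat2} (hE : IsPOVMPair E₀ E₁) :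
    (E₀.trace).re + (E₁.trace).re = 2 := by
  rw [← Complex.add_re, ← Matrix.trace_add, hE.2.2]
  simp

lemma IsPOVMPair.blochVector_snd {E₀ E₁ : Mat2} (hE : IsPOVMPair E₀ E₁) :
    blochVector E₁ = -blochVector E₀ := by
  rw [eq_neg_iff_add_eq_zero, add_comm, ← map_add, hE.2.2, blochVector_one]

lemma IsPOVMPair.norm_blochVector_le {E₀ E₁ : Mat2} (hE : IsPOVMPair E₀ E₁) :
    ‖blochVector E₀‖ ≤ 1 / 2 := by
  have h₀ := hE.1.norm_blochVector_le
  have h₁ := hE.2.1.norm_blochVector_le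
  rw [hE.blochVector_snd, norm_neg] at h₁
  linarith [hE.re_trace_add]

lemma norm_add_add_norm_sub_le {E : Type*} [NormedAddCommGroup E] [InnerProductSpace ℝ E]
    {u v : E} {r : ℝ} (hu : ‖u‖ ≤ r) (hv : ‖v‖ ≤ r) :
    ‖u + v‖ + ‖u - v‖ ≤ 2 * √2 * r := by
  have hpar := parallelogram_law_with_norm ℝ u v
  have hsqrt : √2 ^ 2 = 2 := Real.sq_sqrt zero_le_two
  have hr : 0 ≤ r := (norm_nonneg u).trans hu
  refine (pow_le_pow_iff_left₀ (by positivity) (by positivity) two_ne_zero).mp ?_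
  calc (‖u + v‖ + ‖u - v‖) ^ 2 ≤ 2 * (‖u + v‖ ^ 2 + ‖u - v‖ ^ 2) := by
        nlinarith [sq_nonneg (‖u + v‖ - ‖u - v‖)]
    _ = 4 * (‖u‖ ^ 2 + ‖v‖ ^ 2) := by rw [hpar]; ring
    _ ≤ 4 * (r ^ 2 + r ^ 2) := by gcongr
    _ = (2 * √2 * r) ^ 2 := by rw [mul_pow, mul_pow, hsqrt]; ring

lemma qrac_sum_le (σ : Fin 2 → Fin 2 → Mat2) (hσ : ∀ x₀ x₁, IsQubitState (σ x₀ x₁))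
    (C : Fin 2 → Fin 2 → Mat2) (hC : ∀ z, IsPOVMPair (C z 0) (C z 1)) :
    ∑ x₀ : Fin 2, ∑ x₁ : Fin 2, ∑ z : Fin 2, ((σ x₀ x₁ * C z (sel x₀ x₁ z)).trace).re
      ≤ 4 + 2 * √2 := by
  have hpsd : ∀ z i, (C z i).PosSemidef := fun z i => by
    fin_cases i
    exacts [(hC z).1, (hC z).2.1]
  have hbound : ∀ x₀ x₁, ∑ z : Fin 2, ((σ x₀ x₁ * C z (sel x₀ x₁ z)).trace).re
      ≤ ((C 0 x₀).trace.re + (C 1 x₁).trace.re) / 2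
        + ‖blochVector (C 0 x₀) + blochVector (C 1 x₁)‖ := fun x₀ x₁ => by
    simpa [Fin.sum_univ_two, sel, Matrix.mul_add] using
      (hσ x₀ x₁).re_trace_mul_le ((hpsd 0 x₀).add (hpsd 1 x₁)).isHermitian
  have hnorm := norm_add_add_norm_sub_le (hC 0).norm_blochVector_le (hC 1).norm_blochVector_le
  have hb₀ := hbound 0 0
  have hb₁ := hbound 0 1
  have hb₂ := hbound 1 0
  have hb₃ := hbound 1 1
  rw [(hC 1).blochVector_snd, ← sub_eq_add_neg] at hb₁
  rw [(hC 0).blochVector_snd, neg_add_eq_sub, norm_sub_rev] at hb₂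
  rw [(hC 0).blochVector_snd, (hC 1).blochVector_snd, ← neg_add, norm_neg] at hb₃
  simp only [Fin.sum_univ_two] at hb₀ hb₁ hb₂ hb₃ ⊢
  linarith [(hC 0).re_trace_add, (hC 1).re_trace_add]

theorem unitary_strategy_bound
    (α : ℝ) (hα : α ∈ Set.Icc (0 : ℝ) 1)
    (ρ : Fin 2 → Fin 2 → Mat2) (hρ : ∀ x₀ x₁, IsQubitState (ρ x₀ x₁))
    (U : Fin 2 → Mat2) (hU : ∀ y, U y ∈ Matrix.unitaryGroup (Fin 2) ℂ)
    (C : Fin 2 → Fin 2 → Mat2) (hC : ∀ z, IsPOVMPair (C z 0) (C z 1)) :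
    α / 2 + (1 - α) / 16 *
      ∑ x₀ : Fin 2, ∑ x₁ : Fin 2, ∑ y : Fin 2, ∑ z : Fin 2,
        ((U y * ρ x₀ x₁ * (U y)ᴴ * C z (sel x₀ x₁ z)).trace).re
    ≤ 1 / 2 + (1 - α) / (2 * Real.sqrt 2) := by
  have hqrac (y : Fin 2) := qrac_sum_le _ (fun x₀ x₁ => (hρ x₀ x₁).unitary_conj (hU y)) C hC
  have hsum : ∑ x₀ : Fin 2, ∑ x₁ : Fin 2, ∑ y : Fin 2, ∑ z : Fin 2,
      ((U y * ρ x₀ x₁ * (U y)ᴴ * C z (sel x₀ x₁ z)).trace).re ≤ 2 * (4 + 2 * √2) := by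
    have h₀ := hqrac 0
    have h₁ := hqrac 1
    simp only [Fin.sum_univ_two] at h₀ h₁ ⊢
    linarith
  have hsqrt : √2 * √2 = 2 := Real.mul_self_sqrt zero_le_two
  calc _ ≤ α / 2 + (1 - α) / 16 * (2 * (4 + 2 * √2)) := by
        gcongr
        linarith [hα.2]
    _ = 1 / 2 + (1 - α) / (2 * √2) := by
        field_simp
        linear_combination (8 - 8 * α) * hsqrt
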